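/- In every proper 3-coloring f of the coloring lower-bound graph G_{x,y}, each of the four sets A_1, A_2, B_1, B_2 contains at least one node whose color equals f(c_a^0). -/

import Mathlib

/-- Vertices of the coloring lower-bound graph.  The side `s : Bool`
distinguishes Alice (`false`, the `a`'s) from Bob (`true`, the `b`'s), and
`ℓ : Bool` distinguishes index `1` (`false`) from index `2` (`true`).
So `node false false i = a_1^i`, `bar s ℓ i = s̄_ℓ^i`, `dbar s ℓ i = s̿_ℓ^i`,
`f s ℓ h = f_S^h`, `t s ℓ h = t_S^h`, `c false m = c_a^m`, `c true m = c_b^m`. -/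
inductive CVertex (k logk : ℕ) where
  | node (s ℓ : Bool) (i : Fin k)
  | bar (s ℓ : Bool) (i : Fin k)
  | dbar (s ℓ : Bool) (i : Fin k)
  | f (s ℓ : Bool) (h : Fin logk)
  | t (s ℓ : Bool) (h : Fin logk)
  | c (s : Bool) (m : Fin 3)
deriving DecidableEq

/-- The index, among `{0,1,2}`, of the `c`-node attached to the bit-nodes of the
sets indexed by `ℓ` (i.e. `1` for `ℓ = 1` and `2` for `ℓ = 2`). -/
def ownIdx (ℓ : Bool) : Fin 3 := if ℓ then 2 else 1

/-- The "other" index: `2` for `ℓ = 1` and `1` for `ℓ = 2`. -/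
def othIdx (ℓ : Bool) : Fin 3 := if ℓ then 1 else 2

/-- Base relation generating the edges (i)–(x) of the coloring lower-bound graph
`G_{x,y}`. -/
def cRel (k logk : ℕ) (x y : Fin k → Fin k → Bool) (u v : CVertex k logk) : Prop :=
  -- (i) each node s_ℓ^i is adjacent to exactly its bit-nodes bin(s_ℓ^i)
  (∃ (s ℓ : Bool) (i : Fin k) (h : Fin logk), u = CVertex.node s ℓ i ∧
    v = if i.val.testBit h.val then CVertex.t s ℓ h else CVertex.f s ℓ h) ∨
  -- (ii) the 4-cycles on the bit-nodes
  (∃ (ℓ : Bool) (h : Fin logk),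
    (u = CVertex.f false ℓ h ∧ v = CVertex.t false ℓ h) ∨
    (u = CVertex.t false ℓ h ∧ v = CVertex.f true ℓ h) ∨
    (u = CVertex.f true ℓ h ∧ v = CVertex.t true ℓ h) ∨
    (u = CVertex.t true ℓ h ∧ v = CVertex.f false ℓ h)) ∨
  -- (iii) the two triangles on the c-nodes, and c_a^m ~ c_b^m' for m ≠ m'
  (∃ (s : Bool) (m m' : Fin 3), m ≠ m' ∧ u = CVertex.c s m ∧ v = CVertex.c s m') ∨
  (∃ (m m' : Fin 3), m ≠ m' ∧ u = CVertex.c false m ∧ v = CVertex.c true m') ∨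
  -- (iv) the path edges (s_ℓ^i, s̄_ℓ^i), (s̄_ℓ^i, s̿_ℓ^i), (s̿_ℓ^i, s̄_ℓ^{i+1})
  (∃ (s ℓ : Bool) (i : Fin k), u = CVertex.node s ℓ i ∧ v = CVertex.bar s ℓ i) ∨
  (∃ (s ℓ : Bool) (i : Fin k), u = CVertex.bar s ℓ i ∧ v = CVertex.dbar s ℓ i) ∨
  (∃ (s ℓ : Bool) (i : Fin k) (hi : i.val + 1 < k),
    u = CVertex.dbar s ℓ i ∧ v = CVertex.bar s ℓ ⟨i.val + 1, hi⟩) ∨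
  -- (v) c_s^ℓ adjacent to every bit-node of the sets indexed by ℓ
  (∃ (s ℓ : Bool) (h : Fin logk), u = CVertex.c s (ownIdx ℓ) ∧
    (v = CVertex.f s ℓ h ∨ v = CVertex.t s ℓ h)) ∨
  -- (vi)–(ix) c_s^{oth ℓ} ~ s_ℓ^i, c_s^{own ℓ} ~ s̿_ℓ^i,
  --           c_s^{oth ℓ} ~ s̄_ℓ^0 and c_s^{oth ℓ} ~ s̿_ℓ^{k−1}
  (∃ (s ℓ : Bool) (i : Fin k), u = CVertex.c s (othIdx ℓ) ∧ v = CVertex.node s ℓ i) ∨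
  (∃ (s ℓ : Bool) (i : Fin k), u = CVertex.c s (ownIdx ℓ) ∧ v = CVertex.dbar s ℓ i) ∨
  (∃ (s ℓ : Bool) (i : Fin k), i.val = 0 ∧
    u = CVertex.c s (othIdx ℓ) ∧ v = CVertex.bar s ℓ i) ∨
  (∃ (s ℓ : Bool) (i : Fin k), i.val = k - 1 ∧
    u = CVertex.c s (othIdx ℓ) ∧ v = CVertex.dbar s ℓ i) ∨
  -- (x) the input edges
  (∃ i j : Fin k, x i j = false ∧
    u = CVertex.node false false i ∧ v = CVertex.node false true j) ∨
  (∃ i j : Fin k, y i j = false ∧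
    u = CVertex.node true false i ∧ v = CVertex.node true true j)

/-- The coloring lower-bound graph `G_{x,y}`. -/
def cGraph (k logk : ℕ) (x y : Fin k → Fin k → Bool) : SimpleGraph (CVertex k logk) :=
  SimpleGraph.fromRel (cRel k logk x y)

/-!
Suppose no node of `s_ℓ` had the colour of `c_a^0`, which is also the colour of `c_s^0`.
The nodes avoid the colour of `c_s^{othIdx ℓ}`, so all of them get the colour of
`c_s^{ownIdx ℓ}`. The path `s̄_ℓ^0, s̿_ℓ^0, s̄_ℓ^1, …, s̿_ℓ^{k-1}` avoids that colour, so it is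
properly coloured with the two others; since `s̄_ℓ^0` avoids the colour of `c_s^{othIdx ℓ}`, the
alternation gives `s̿_ℓ^{k-1}` exactly that colour, yet the two are adjacent.
-/

lemma Fin.eq_or_eq_of_ne_of_three {a b c x : Fin 3} (hab : a ≠ b) (hac : a ≠ c) (hbc : b ≠ c)
    (hx : x ≠ c) : x = a ∨ x = b := by
  omega

lemma Fin.eq_of_alternating {α : Type*} {k : ℕ} {a b : α} (p q : Fin k → α)
    (hp : ∀ i, p i = a ∨ p i = b) (hq : ∀ i, q i = a ∨ q i = b)
    (hstart : ∀ i : Fin k, i.val = 0 → p i ≠ b) (hpq : ∀ i, p i ≠ q i)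
    (hqp : ∀ (i : Fin k) (hi : i.val + 1 < k), q i ≠ p ⟨i.val + 1, hi⟩) (i : Fin k) :
    q i = b := by
  have hq_of_p (j : Fin k) (hpa : p j = a) : q j = b :=
    (hq j).resolve_left fun hqa => hpq j (hpa.trans hqa.symm)
  have hp_of_q (j : Fin k) (hj : j.val + 1 < k) (hqb : q j = b) : p ⟨j.val + 1, hj⟩ = a :=
    (hp _).resolve_right fun hpb => hqp j hj (hqb.trans hpb.symm)
  obtain ⟨n, hn⟩ := i
  induction n with
  | zero => exact hq_of_p _ ((hp _).resolve_right (hstart _ rfl))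
  | succ n ih => exact hq_of_p _ (hp_of_q ⟨n, by omega⟩ hn (ih (by omega)))

namespace cGraph

variable {k logk : ℕ} {x y : Fin k → Fin k → Bool} (f : (cGraph k logk x y).Coloring (Fin 3))

lemma color_ne_of_cRel {u v : CVertex k logk} (hne : u ≠ v) (h : cRel k logk x y u v) :
    f u ≠ f v :=
  f.valid ((SimpleGraph.fromRel_adj _ u v).mpr ⟨hne, Or.inl h⟩)

lemma color_c_ne (s : Bool) {m m' : Fin 3} (h : m ≠ m') :
    f (CVertex.c s m) ≠ f (CVertex.c s m') :=
  color_ne_of_cRel f (by simpa using h) (by simp [cRel, h])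

lemma color_c_zero (s : Bool) : f (CVertex.c s 0) = f (CVertex.c false 0) := by
  cases s
  · rfl
  · have hne (m : Fin 3) (hm : m ≠ 0) : f (CVertex.c false 0) ≠ f (CVertex.c true m) :=
      color_ne_of_cRel f (by simp) (by simp [cRel, hm.symm])
    have h01 : f (CVertex.c true 0) ≠ f (CVertex.c true 1) := color_c_ne f true (by decide)
    have h02 : f (CVertex.c true 0) ≠ f (CVertex.c true 2) := color_c_ne f true (by decide)
    have h12 : f (CVertex.c true 1) ≠ f (CVertex.c true 2) := color_c_ne f true (by decide)
    exact ((Fin.eq_or_eq_of_ne_of_three h01 h02 h12 (hne 2 (by decide))).resolve_right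
      (hne 1 (by decide))).symm

variable (s ℓ : Bool)

lemma color_node_ne_c_othIdx (i : Fin k) :
    f (CVertex.node s ℓ i) ≠ f (CVertex.c s (othIdx ℓ)) :=
  (color_ne_of_cRel f (by simp) (by simp [cRel])).symm

lemma color_dbar_ne_c_ownIdx (i : Fin k) :
    f (CVertex.dbar s ℓ i) ≠ f (CVertex.c s (ownIdx ℓ)) :=
  (color_ne_of_cRel f (by simp) (by simp [cRel])).symm

lemma color_node_ne_bar (i : Fin k) : f (CVertex.node s ℓ i) ≠ f (CVertex.bar s ℓ i) :=
  color_ne_of_cRel f (by simp) (by simp [cRel])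

lemma color_bar_ne_dbar (i : Fin k) : f (CVertex.bar s ℓ i) ≠ f (CVertex.dbar s ℓ i) :=
  color_ne_of_cRel f (by simp) (by simp [cRel])

lemma color_dbar_ne_bar_succ (i : Fin k) (hi : i.val + 1 < k) :
    f (CVertex.dbar s ℓ i) ≠ f (CVertex.bar s ℓ ⟨i.val + 1, hi⟩) :=
  color_ne_of_cRel f (by simp) (by simp [cRel, hi])

lemma color_bar_ne_c_othIdx_of_val_eq_zero (i : Fin k) (hi : i.val = 0) :
    f (CVertex.bar s ℓ i) ≠ f (CVertex.c s (othIdx ℓ)) :=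
  (color_ne_of_cRel f (by simp) (by simp [cRel, hi])).symm

lemma color_dbar_ne_c_othIdx_of_val_eq_pred (i : Fin k) (hi : i.val = k - 1) :
    f (CVertex.dbar s ℓ i) ≠ f (CVertex.c s (othIdx ℓ)) :=
  (color_ne_of_cRel f (by simp) (by simp [cRel, hi])).symm

lemma color_eq_or_eq_of_ne_c_ownIdx {v : CVertex k logk}
    (hv : f v ≠ f (CVertex.c s (ownIdx ℓ))) :
    f v = f (CVertex.c s 0) ∨ f v = f (CVertex.c s (othIdx ℓ)) :=
  Fin.eq_or_eq_of_ne_of_three (color_c_ne f s (by cases ℓ <;> decide))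
    (color_c_ne f s (by cases ℓ <;> decide)) (color_c_ne f s (by cases ℓ <;> decide)) hv

lemma color_eq_c_ownIdx_of_ne {v : CVertex k logk} (h0 : f v ≠ f (CVertex.c s 0))
    (hoth : f v ≠ f (CVertex.c s (othIdx ℓ))) : f v = f (CVertex.c s (ownIdx ℓ)) :=
  ((Fin.eq_or_eq_of_ne_of_three (color_c_ne f s (by cases ℓ <;> decide))
    (color_c_ne f s (by cases ℓ <;> decide)) (color_c_ne f s (by cases ℓ <;> decide)) hoth)
    |>.resolve_left h0)

lemma color_dbar_eq_c_othIdx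
    (hnode : ∀ i, f (CVertex.node s ℓ i) = f (CVertex.c s (ownIdx ℓ))) (i : Fin k) :
    f (CVertex.dbar s ℓ i) = f (CVertex.c s (othIdx ℓ)) :=
  Fin.eq_of_alternating (fun j => f (CVertex.bar s ℓ j)) (fun j => f (CVertex.dbar s ℓ j))
    (fun j => color_eq_or_eq_of_ne_c_ownIdx f s ℓ
      (hnode j ▸ (color_node_ne_bar f s ℓ j).symm))
    (fun j => color_eq_or_eq_of_ne_c_ownIdx f s ℓ (color_dbar_ne_c_ownIdx f s ℓ j))
    (color_bar_ne_c_othIdx_of_val_eq_zero f s ℓ) (color_bar_ne_dbar f s ℓ)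
    (color_dbar_ne_bar_succ f s ℓ) i

end cGraph

theorem cGraph_color_c0_exists_general (k logk : ℕ) (hk : 2 ≤ k)
    (x y : Fin k → Fin k → Bool)
    (f : (cGraph k logk x y).Coloring (Fin 3)) (s ℓ : Bool) :
    ∃ i : Fin k, f (CVertex.node s ℓ i) = f (CVertex.c false 0) := by
  by_contra! hnone
  have hnode (i : Fin k) : f (CVertex.node s ℓ i) = f (CVertex.c s (ownIdx ℓ)) :=
    cGraph.color_eq_c_ownIdx_of_ne f s ℓ (cGraph.color_c_zero f s ▸ hnone i)
      (cGraph.color_node_ne_c_othIdx f s ℓ i)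
  have hlast : k - 1 < k := by omega
  exact cGraph.color_dbar_ne_c_othIdx_of_val_eq_pred f s ℓ ⟨k - 1, hlast⟩ rfl
    (cGraph.color_dbar_eq_c_othIdx f s ℓ hnode _)

/-- in every proper 3-coloring `f` of the coloring lower-bound
graph `G_{x,y}`, each of the four sets `A_1, A_2, B_1, B_2` contains at least one
node whose color equals `f (c_a^0)`. -/
theorem cGraph_color_c0_exists (k logk : ℕ) (hk : 2 ≤ k) (hpow : k = 2 ^ logk)
    (x y : Fin k → Fin k → Bool)
    (f : (cGraph k logk x y).Coloring (Fin 3)) (s ℓ : Bool) :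
    ∃ i : Fin k, f (CVertex.node s ℓ i) = f (CVertex.c false 0) :=
  cGraph_color_c0_exists_general k logk hk x y f s ℓ
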